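/- For nonnegative integers i and real A, the function ψ(x) = cosh(x/2)^{1/2 - A} · P_i^{(-1/2, -A)}(cosh x) satisfies -ψ'' + (1/4)(1/4 - A²)·sech²(x/2)·ψ = -(A/2 - i - 1/4)²·ψ on ℝ. -/

import Mathlib

/-- The Jacobi polynomial
P_n^{(α,β)}(x) = ∑_{s=0}^n (1/(s!(n-s)!)) (∏_{j=s+1}^n (α+j)) (∏_{j=1}^s (α+β+n+j)) ((x-1)/2)^s. -/
noncomputable def jacobiP (n : ℕ) (α β : ℝ) (x : ℝ) : ℝ :=
  ∑ s ∈ Finset.range (n + 1),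
    (1 / ((Nat.factorial s : ℝ) * (Nat.factorial (n - s) : ℝ)))
      * (∏ j ∈ Finset.Icc (s + 1) n, (α + (j : ℝ)))
      * (∏ j ∈ Finset.Icc 1 s, (α + β + (n : ℝ) + (j : ℝ)))
      * ((x - 1) / 2) ^ s

/-! Put `p = 1/2 - A`. Since `(cosh x - 1)/2 = sinh² (x/2)`, the function `ψ` is the combination
`∑ a_s cosh (x/2) ^ p sinh (x/2) ^ (2s)` of the Jacobi coefficients `a_s`. Because
`cosh² = 1 + sinh²`, the Schrödinger operator acts bidiagonally on these functions: it sends the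
`s`-th one to `-(p + 2s)²/4` times itself minus `s(2s - 1)/2` times the `(s-1)`-st. The two-term
recursion of the Jacobi coefficients is exactly what makes the lower terms telescope away, leaving
the eigenvalue `-(p + 2i)²/4 = -(A/2 - i - 1/4)²` of the top one. -/

namespace PoschlTeller

open Real Finset

noncomputable def coshSinhHalf (q : ℝ) (n : ℕ) (x : ℝ) : ℝ :=
  cosh (x / 2) ^ q * sinh (x / 2) ^ n

/-- At `n = 0` the truncated exponent `n - 1` is harmless: its coefficient is `0`. -/
theorem hasDerivAt_coshSinhHalf (q : ℝ) (n : ℕ) (x : ℝ) :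
    HasDerivAt (coshSinhHalf q n)
      (q / 2 * coshSinhHalf (q - 1) (n + 1) x + n / 2 * coshSinhHalf (q + 1) (n - 1) x) x := by
  have hhalf : HasDerivAt (fun y : ℝ => y / 2) (1 / 2) x := (hasDerivAt_id x).div_const 2
  have hcosh := hhalf.cosh.rpow_const (p := q) (Or.inl (cosh_pos _).ne')
  refine (hcosh.mul (hhalf.sinh.pow n)).congr_deriv ?_
  simp only [coshSinhHalf, Pi.pow_apply]
  rw [rpow_add_one (cosh_pos _).ne', pow_succ]
  ring

theorem differentiable_coshSinhHalf (q : ℝ) (n : ℕ) : Differentiable ℝ (coshSinhHalf q n) :=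
  fun x => (hasDerivAt_coshSinhHalf q n x).differentiableAt

theorem deriv_coshSinhHalf (q : ℝ) (n : ℕ) :
    deriv (coshSinhHalf q n) =
      fun x => q / 2 * coshSinhHalf (q - 1) (n + 1) x + n / 2 * coshSinhHalf (q + 1) (n - 1) x :=
  funext fun x => (hasDerivAt_coshSinhHalf q n x).deriv

theorem coshSinhHalf_add_two (q : ℝ) (n : ℕ) (x : ℝ) :
    coshSinhHalf (q + 2) n x = coshSinhHalf q n x + coshSinhHalf q (n + 2) x := by
  unfold coshSinhHalf
  rw [rpow_add (cosh_pos _), rpow_two, cosh_sq, pow_add]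
  ring

theorem sech_sq_mul_coshSinhHalf (q : ℝ) (n : ℕ) (x : ℝ) :
    (1 / cosh (x / 2)) ^ 2 * coshSinhHalf q n x = coshSinhHalf (q - 2) n x := by
  unfold coshSinhHalf
  rw [rpow_sub (cosh_pos _), rpow_two]
  field_simp

theorem deriv_deriv_coshSinhHalf (q : ℝ) (n : ℕ) (x : ℝ) :
    deriv (deriv (coshSinhHalf q n)) x =
      q * (q - 1) / 4 * coshSinhHalf (q - 2) (n + 2) x
        + (q * (2 * n + 1) + n) / 4 * coshSinhHalf q n x
        + n * (n - 1) / 4 * coshSinhHalf (q + 2) (n - 2) x := by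
  rw [deriv_coshSinhHalf]
  refine (((hasDerivAt_coshSinhHalf _ _ x).const_mul (q / 2)).add
    ((hasDerivAt_coshSinhHalf _ _ x).const_mul ((n : ℝ) / 2))).deriv.trans ?_
  rw [show q - 1 - 1 = q - 2 by ring, sub_add_cancel, add_sub_cancel_right,
    show q + 1 + 1 = q + 2 by ring, Nat.add_sub_cancel]
  rcases n with _ | m
  · push_cast
    ring
  · rw [Nat.add_sub_cancel, show m + 1 - 2 = m - 1 by omega]
    push_cast
    ring

theorem differentiable_deriv_coshSinhHalf (q : ℝ) (n : ℕ) :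
    Differentiable ℝ (deriv (coshSinhHalf q n)) := by
  rw [deriv_coshSinhHalf]
  exact ((differentiable_coshSinhHalf _ _).const_mul _).add
    ((differentiable_coshSinhHalf _ _).const_mul _)

/-- With `p = 1/2 - A` the potential `-p(p-1)/4 · sech² (x/2)` is the Pöschl–Teller one. -/
noncomputable def schrodingerOp (p : ℝ) (f : ℝ → ℝ) (x : ℝ) : ℝ :=
  -deriv (deriv f) x - p * (p - 1) / 4 * (1 / cosh (x / 2)) ^ 2 * f x

theorem schrodingerOp_coshSinhHalf (p : ℝ) (s : ℕ) (x : ℝ) :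
    schrodingerOp p (coshSinhHalf p (2 * s)) x =
      -((p + 2 * s) ^ 2 / 4) * coshSinhHalf p (2 * s) x
        - s * (2 * s - 1) / 2 * coshSinhHalf p (2 * (s - 1)) x := by
  have hlow : coshSinhHalf p (2 * s) x
      = coshSinhHalf (p - 2) (2 * s) x + coshSinhHalf (p - 2) (2 * s + 2) x := by
    rw [← coshSinhHalf_add_two, sub_add_cancel]
  rw [schrodingerOp, deriv_deriv_coshSinhHalf, mul_assoc _ (_ ^ 2), sech_sq_mul_coshSinhHalf]
  rcases s with _ | k
  · rw [hlow]
    push_cast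
    ring
  · have hhigh : coshSinhHalf (p + 2) (2 * (k + 1) - 2) x
        = coshSinhHalf p (2 * k) x + coshSinhHalf p (2 * (k + 1)) x := by
      rw [coshSinhHalf_add_two, show 2 * (k + 1) - 2 = 2 * k by omega]
      rfl
    rw [hhigh, hlow, Nat.add_sub_cancel]
    push_cast
    ring

theorem schrodingerOp_sum {ι : Type*} (p : ℝ) (t : Finset ι) (a : ι → ℝ) (f : ι → ℝ → ℝ)
    (hf : ∀ i, Differentiable ℝ (f i)) (hf' : ∀ i, Differentiable ℝ (deriv (f i))) (x : ℝ) :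
    schrodingerOp p (fun y => ∑ i ∈ t, a i * f i y) x = ∑ i ∈ t, a i * schrodingerOp p (f i) x := by
  have hderiv : deriv (fun y => ∑ i ∈ t, a i * f i y) = fun y => ∑ i ∈ t, a i * deriv (f i) y :=
    funext fun y => (HasDerivAt.fun_sum fun i _ => ((hf i y).hasDerivAt.const_mul (a i))).deriv
  have hderiv2 : deriv (fun y => ∑ i ∈ t, a i * deriv (f i) y) x
      = ∑ i ∈ t, a i * deriv (deriv (f i)) x :=
    (HasDerivAt.fun_sum fun i _ => ((hf' i x).hasDerivAt.const_mul (a i))).deriv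
  simp only [schrodingerOp, hderiv, hderiv2, mul_sum, ← sum_neg_distrib, ← sum_sub_distrib]
  refine sum_congr rfl fun i _ => ?_
  ring

theorem sum_range_bidiagonal_eq_mul_sum {R : Type*} [CommRing R] (n : ℕ) (a μ ν g : ℕ → R)
    (hν : ν 0 = 0) (hrec : ∀ s < n, a (s + 1) * ν (s + 1) = a s * (μ s - μ n)) :
    ∑ s ∈ range (n + 1), a s * (μ s * g s - ν s * g (s - 1))
      = μ n * ∑ s ∈ range (n + 1), a s * g s := by
  have hshift : ∑ s ∈ range (n + 1), a s * ν s * g (s - 1)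
      = ∑ s ∈ range n, a s * (μ s - μ n) * g s := by
    rw [sum_range_succ', hν, mul_zero, zero_mul, add_zero]
    exact sum_congr rfl fun s hs => by rw [Nat.add_sub_cancel, hrec s (mem_range.mp hs)]
  have hterm : ∀ s, a s * μ s * g s - a s * (μ s - μ n) * g s = μ n * (a s * g s) :=
    fun s => by ring
  simp only [mul_sub, ← mul_assoc, sum_sub_distrib]
  rw [hshift, sum_range_succ, sum_range_succ, mul_add, mul_sum, ← sum_congr rfl fun s _ => hterm s,
    sum_sub_distrib]
  ring

noncomputable def jacobiCoeff (n : ℕ) (α β : ℝ) (s : ℕ) : ℝ :=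
  (1 / ((Nat.factorial s : ℝ) * (Nat.factorial (n - s) : ℝ)))
    * (∏ j ∈ Icc (s + 1) n, (α + (j : ℝ)))
    * (∏ j ∈ Icc 1 s, (α + β + (n : ℝ) + (j : ℝ)))

theorem jacobiP_eq_sum (n : ℕ) (α β x : ℝ) :
    jacobiP n α β x = ∑ s ∈ range (n + 1), jacobiCoeff n α β s * ((x - 1) / 2) ^ s :=
  rfl

theorem jacobiCoeff_succ_mul (n : ℕ) (α β : ℝ) {s : ℕ} (hs : s < n) :
    jacobiCoeff n α β (s + 1) * ((s + 1) * (α + s + 1))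
      = jacobiCoeff n α β s * ((n - s) * (α + β + n + s + 1)) := by
  have hIcc : Icc (s + 1) n = insert (s + 1) (Icc (s + 1 + 1) n) := by
    ext j; simp only [mem_Icc, mem_insert]; omega
  have hfact : (n - s).factorial = (n - (s + 1) + 1) * (n - (s + 1)).factorial := by
    rw [show n - s = n - (s + 1) + 1 by omega, Nat.factorial_succ]
  have hcast : ((n - (s + 1) : ℕ) : ℝ) = n - s - 1 := by
    rw [Nat.cast_sub hs]; push_cast; ring
  have hns : (n : ℝ) - s ≠ 0 := sub_ne_zero.mpr (by exact_mod_cast hs.ne')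
  unfold jacobiCoeff
  rw [hIcc, prod_insert (by simp), prod_Icc_succ_top (Nat.le_add_left 1 s), hfact,
    Nat.factorial_succ s]
  push_cast [hcast]
  rw [sub_add_cancel]
  field_simp
  ring

theorem cosh_sub_one_div_two (x : ℝ) : (cosh x - 1) / 2 = sinh (x / 2) ^ 2 := by
  have h := cosh_two_mul (x / 2)
  rw [mul_div_cancel₀ x two_ne_zero] at h
  rw [h, cosh_sq]
  ring

theorem cosh_half_rpow_mul_jacobiP_cosh (p : ℝ) (n : ℕ) (α β x : ℝ) :
    cosh (x / 2) ^ p * jacobiP n α β (cosh x)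
      = ∑ s ∈ range (n + 1), jacobiCoeff n α β s * coshSinhHalf p (2 * s) x := by
  rw [jacobiP_eq_sum, cosh_sub_one_div_two, mul_sum]
  refine sum_congr rfl fun s _ => ?_
  rw [coshSinhHalf, pow_mul]
  ring

end PoschlTeller

open PoschlTeller Finset

/-- ψ(x) = cosh(x/2)^{1/2-A}·P_i^{(-1/2,-A)}(cosh x) satisfies
-ψ'' + ¼(¼ - A²)sech²(x/2)·ψ = -(A/2 - i - 1/4)²·ψ on ℝ. -/
theorem poschl_teller_even_bound_states (i : ℕ) (A : ℝ)
    (ψ : ℝ → ℝ)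
    (hψ : ψ = fun x => Real.cosh (x / 2) ^ ((1 : ℝ) / 2 - A)
        * jacobiP i (-(1 : ℝ) / 2) (-A) (Real.cosh x)) :
    ∀ x : ℝ,
      -(deriv (deriv ψ) x)
          + (1 / 4) * (1 / 4 - A ^ 2) * (1 / Real.cosh (x / 2)) ^ 2 * ψ x
        = -((A / 2 - (i : ℝ) - 1 / 4) ^ 2) * ψ x := by
  intro x
  set a := jacobiCoeff i (-(1 : ℝ) / 2) (-A)
  set g : ℕ → ℝ → ℝ := fun s => coshSinhHalf ((1 : ℝ) / 2 - A) (2 * s)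
  have hψ_sum : ψ = fun y => ∑ s ∈ range (i + 1), a s * g s y :=
    hψ.trans (funext fun y => cosh_half_rpow_mul_jacobiP_cosh _ _ _ _ _)
  have hrec : ∀ s < i, a (s + 1) * (((s + 1 : ℕ) : ℝ) * (2 * ((s + 1 : ℕ) : ℝ) - 1) / 2)
      = a s * (-(((1 : ℝ) / 2 - A + 2 * s) ^ 2 / 4) - -(((1 : ℝ) / 2 - A + 2 * i) ^ 2 / 4)) := by
    intro s hs
    have := jacobiCoeff_succ_mul i (-(1 : ℝ) / 2) (-A) hs
    push_cast
    linear_combination this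
  calc -(deriv (deriv ψ) x) + (1 / 4) * (1 / 4 - A ^ 2) * (1 / Real.cosh (x / 2)) ^ 2 * ψ x
      = schrodingerOp ((1 : ℝ) / 2 - A) ψ x := by rw [schrodingerOp]; ring
    _ = ∑ s ∈ range (i + 1), a s * schrodingerOp ((1 : ℝ) / 2 - A) (g s) x := by
      rw [hψ_sum, schrodingerOp_sum _ _ _ _ (fun s => differentiable_coshSinhHalf _ _)
        (fun s => differentiable_deriv_coshSinhHalf _ _)]
    _ = -((A / 2 - (i : ℝ) - 1 / 4) ^ 2) * ψ x := by
      simp only [g, schrodingerOp_coshSinhHalf]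
      rw [sum_range_bidiagonal_eq_mul_sum i a (fun s => -(((1 : ℝ) / 2 - A + 2 * s) ^ 2 / 4))
        (fun s => s * (2 * s - 1) / 2) (fun s => g s x) (by simp) hrec, hψ_sum]
      ring
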